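/- Let k > 0 and 0 < c < 1 be real, and let n, x ∈ ℕ (with the convention M̂_{−1}(x; 2k, c) := 0). Then √(n(2k+n−1)) M̂_{n−1}(x; 2k, c) − 2√c (k+n) M̂_n(x; 2k, c) + c√((n+1)(2k+n)) M̂_{n+1}(x; 2k, c) = −√c (1−c)(2k+x) M̂_n(x+1; 2k, c). (This identity encodes the action π_k^+(B_c) v⁽ˣ⁾ = −√((x+1)(2k+x)) v⁽ˣ⁺¹⁾ of the conjugated raising element B_c on the X_c-eigenvectors v⁽ˣ⁾_n = M̂_n(x; 2k, c)√(w(x; 2k, c)) in the positive discrete series representation of su(1,1).) -/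

import Mathlib

/-!
With `u = 1 - 1/c`, each Meixner polynomial is a polynomial in `u` whose coefficients satisfy
first-order rational recursions in the summation index. Comparing coefficients of `u ^ j` gives
the three-term recurrence in `n` and a contiguous relation between `M_n(x + 1)`, `M_n(x)` and
`M_{n-1}(x)`; `c` times the first plus `1 - c` times the second relates `M_n(x + 1)` to
`M_{n-1}(x)`, `M_n(x)`, `M_{n+1}(x)`. The normalising factors `s_n = √((β)_n c^n / n!)` satisfy
`√(n + 1) s_{n+1} = √c √(β + n) s_n`, which turns this into the orthonormal identity after
multiplying through by `√c`.
-/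

open Finset

/-- Pochhammer symbol `(q)_m = q(q+1)⋯(q+m−1)` for a real `q`. -/
noncomputable def poch (q : ℝ) (m : ℕ) : ℝ := ∏ l ∈ Finset.range m, (q + l)

/-- The Meixner polynomial
`M_n(x; β, c) = ∑_{j=0}^n ((−n)_j (−x)_j/((β)_j j!)) (1 − 1/c)^j = ₂F₁(−n,−x;β;1−1/c)`. -/
noncomputable def meixner (n x : ℕ) (β c : ℝ) : ℝ :=
  ∑ j ∈ Finset.range (n + 1),
    poch (-(n : ℝ)) j * poch (-(x : ℝ)) j / (poch β j * (j.factorial : ℝ)) * (1 - 1 / c) ^ j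

/-- The orthonormal Meixner polynomial `M̂_n(x; β, c) = √((β)_n c^n/n!) M_n(x; β, c)`. -/
noncomputable def meixnerHat (n x : ℕ) (β c : ℝ) : ℝ :=
  Real.sqrt (poch β n * c ^ n / (n.factorial : ℝ)) * meixner n x β c

/-- The Meixner weight `w(x; β, c) = ((β)_x/x!) c^x (1−c)^β`. -/
noncomputable def meixnerWeight (x : ℕ) (β c : ℝ) : ℝ :=
  poch β x / (x.factorial : ℝ) * c ^ x * (1 - c) ^ β

open scoped Nat

lemma poch_zero (q : ℝ) : poch q 0 = 1 := prod_range_zero _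

lemma poch_succ (q : ℝ) (m : ℕ) : poch q (m + 1) = poch q m * (q + m) :=
  prod_range_succ _ _

lemma poch_succ_left (q : ℝ) (m : ℕ) : poch q (m + 1) = q * poch (q + 1) m := by
  simp only [poch, prod_range_succ', Nat.cast_add, Nat.cast_one, Nat.cast_zero, add_zero]
  rw [mul_comm]
  congr 1
  exact prod_congr rfl fun l _ => by ring

lemma poch_nonneg {q : ℝ} (hq : 0 ≤ q) (m : ℕ) : 0 ≤ poch q m :=
  prod_nonneg fun l _ => by positivity

lemma poch_neg_natCast_of_lt {n j : ℕ} (h : n < j) : poch (-n) j = 0 :=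
  prod_eq_zero (mem_range.2 h) (neg_add_cancel _)

lemma poch_neg_natCast_succ (n t : ℕ) :
    poch (-((n + 1 : ℕ) : ℝ)) (t + 1) = -(n + 1) * poch (-n) t := by
  rw [poch_succ_left]
  push_cast
  ring_nf

-- At `n = 0` both sides vanish, so the truncated `n - 1` needs no case split downstream.
lemma natCast_mul_poch_neg_pred (n t : ℕ) :
    (n : ℝ) * poch (-((n - 1 : ℕ) : ℝ)) t = (n - t) * poch (-n) t := by
  cases n with
  | zero => cases t <;> simp [poch_zero, poch_succ_left]
  | succ m =>
    have h := poch_succ (-((m + 1 : ℕ) : ℝ)) t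
    rw [poch_neg_natCast_succ] at h
    simp only [Nat.add_sub_cancel]
    push_cast at h ⊢
    linear_combination -h

noncomputable def meixnerCoeff (n x : ℕ) (β : ℝ) (j : ℕ) : ℝ :=
  poch (-(n : ℝ)) j * poch (-(x : ℝ)) j / (poch β j * (j ! : ℝ))

section MeixnerCoeff

variable (n x : ℕ) (β : ℝ) (t : ℕ)

lemma meixnerCoeff_comm : meixnerCoeff n x β t = meixnerCoeff x n β t := by
  rw [meixnerCoeff, meixnerCoeff, mul_comm (poch _ t)]

lemma meixnerCoeff_zero : meixnerCoeff n x β 0 = 1 := by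
  simp [meixnerCoeff, poch_zero]

lemma meixnerCoeff_succ :
    meixnerCoeff n x β (t + 1) =
      meixnerCoeff n x β t * ((t - n) * (t - x) / ((β + t) * (t + 1))) := by
  rw [meixnerCoeff, meixnerCoeff, poch_succ, poch_succ, poch_succ, Nat.factorial_succ]
  push_cast
  rw [div_mul_div_comm]
  congr 1 <;> ring

lemma meixnerCoeff_succ_left_succ :
    meixnerCoeff (n + 1) x β (t + 1) =
      meixnerCoeff n x β t * (-(n + 1) * (t - x) / ((β + t) * (t + 1))) := by
  rw [meixnerCoeff, meixnerCoeff, poch_neg_natCast_succ, poch_succ, poch_succ,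
    Nat.factorial_succ]
  push_cast
  rw [div_mul_div_comm]
  congr 1 <;> ring

lemma meixnerCoeff_succ_right_succ :
    meixnerCoeff n (x + 1) β (t + 1) =
      meixnerCoeff n x β t * (-(x + 1) * (t - n) / ((β + t) * (t + 1))) := by
  rw [meixnerCoeff_comm, meixnerCoeff_succ_left_succ, meixnerCoeff_comm]

lemma natCast_mul_meixnerCoeff_pred :
    (n : ℝ) * meixnerCoeff (n - 1) x β t = (n - t) * meixnerCoeff n x β t := by
  rw [meixnerCoeff, meixnerCoeff, ← mul_div_assoc, ← mul_assoc, natCast_mul_poch_neg_pred,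
    mul_assoc, mul_div_assoc]

lemma meixnerCoeff_eq_zero_of_lt {t : ℕ} (h : n < t) : meixnerCoeff n x β t = 0 := by
  simp [meixnerCoeff, poch_neg_natCast_of_lt h]

end MeixnerCoeff

lemma meixner_eq_sum_range {n N : ℕ} (x : ℕ) (β c : ℝ) (hN : n + 1 ≤ N) :
    meixner n x β c = ∑ j ∈ range N, meixnerCoeff n x β j * (1 - 1 / c) ^ j :=
  sum_subset (range_subset_range.2 hN) fun j _ hj =>
    mul_eq_zero_of_left (meixnerCoeff_eq_zero_of_lt n x β (by simpa using hj)) _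

lemma sum_range_succ_mul_pow_add_mul_sum_eq_zero {R : Type*} [CommRing R] {a b : ℕ → R}
    {N : ℕ} (u : R) (hb : b 0 = 0) (hab : ∀ j, b (j + 1) + a j = 0) (ha : a N = 0) :
    ∑ j ∈ range (N + 1), b j * u ^ j + u * ∑ j ∈ range (N + 1), a j * u ^ j = 0 := by
  rw [sum_range_succ' _ N, sum_range_succ _ N, ha, hb]
  simp only [zero_mul, add_zero]
  rw [mul_sum, ← sum_add_distrib]
  exact sum_eq_zero fun j _ => by linear_combination u ^ (j + 1) * hab j

section Relations

variable {β c : ℝ}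

theorem meixner_recurrence (hβ : 0 < β) (hc : c ≠ 0) (n x : ℕ) :
    c * (n + β) * meixner (n + 1) x β c - (n + (n + β) * c) * meixner n x β c
      + n * meixner (n - 1) x β c = (c - 1) * x * meixner n x β c := by
  set u := 1 - 1 / c with hu
  have hcu : c * u = c - 1 := by rw [hu]; field_simp
  -- The relation divided by `c`, i.e. multiplied by `1 - u`: now a polynomial identity in `u`.
  have key : n * meixner (n - 1) x β c - (2 * n + β) * meixner n x β c
      + (n + β) * meixner (n + 1) x β c
      + u * ((n - x) * meixner n x β c - n * meixner (n - 1) x β c) = 0 := by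
    rw [meixner_eq_sum_range (n := n - 1) (N := n + 2) x β c (by omega),
      meixner_eq_sum_range (n := n) (N := n + 2) x β c (by omega),
      meixner_eq_sum_range (n := n + 1) (N := n + 2) x β c le_rfl]
    have := sum_range_succ_mul_pow_add_mul_sum_eq_zero (N := n + 1) u
      (b := fun j => n * meixnerCoeff (n - 1) x β j - (2 * n + β) * meixnerCoeff n x β j
        + (n + β) * meixnerCoeff (n + 1) x β j)
      (a := fun j => (n - x) * meixnerCoeff n x β j - n * meixnerCoeff (n - 1) x β j) ?_ ?_ ?_
    · simpa only [add_mul, sub_mul, mul_assoc, sum_add_distrib, sum_sub_distrib, ← mul_sum]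
        using this
    · simp only [meixnerCoeff_zero]; ring
    · intro t
      have : β + t ≠ 0 := by positivity
      rw [natCast_mul_meixnerCoeff_pred, natCast_mul_meixnerCoeff_pred,
        meixnerCoeff_succ_left_succ, meixnerCoeff_succ]
      push_cast
      field_simp
      ring
    · simp only [natCast_mul_meixnerCoeff_pred,
        meixnerCoeff_eq_zero_of_lt n x β (Nat.lt_succ_self n)]
      ring
  linear_combination c * key + (n * meixner (n - 1) x β c - (n - x) * meixner n x β c) * hcu

theorem meixner_contiguous (hβ : 0 < β) (hc : c ≠ 0) (n x : ℕ) :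
    n * meixner (n - 1) x β c + c * (β + x) * meixner n (x + 1) β c
      = c * (n + x + β) * meixner n x β c := by
  set u := 1 - 1 / c with hu
  have hcu : c * u = c - 1 := by rw [hu]; field_simp
  have key : n * meixner (n - 1) x β c - (n + x + β) * meixner n x β c
      + (β + x) * meixner n (x + 1) β c + u * -(n * meixner (n - 1) x β c) = 0 := by
    rw [meixner_eq_sum_range (n := n - 1) (N := n + 1) x β c (by omega),
      meixner_eq_sum_range (n := n) (N := n + 1) x β c le_rfl,
      meixner_eq_sum_range (n := n) (N := n + 1) (x + 1) β c le_rfl]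
    have := sum_range_succ_mul_pow_add_mul_sum_eq_zero (N := n) u
      (b := fun j => n * meixnerCoeff (n - 1) x β j - (n + x + β) * meixnerCoeff n x β j
        + (β + x) * meixnerCoeff n (x + 1) β j)
      (a := fun j => -(n * meixnerCoeff (n - 1) x β j)) ?_ ?_ ?_
    · simpa only [add_mul, sub_mul, neg_mul, mul_assoc, sum_add_distrib, sum_sub_distrib,
        sum_neg_distrib, ← mul_sum] using this
    · simp only [meixnerCoeff_zero]; ring
    · intro t
      have : β + t ≠ 0 := by positivity
      rw [natCast_mul_meixnerCoeff_pred, natCast_mul_meixnerCoeff_pred, meixnerCoeff_succ,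
        meixnerCoeff_succ_right_succ]
      push_cast
      field_simp
      ring
    · simp only [natCast_mul_meixnerCoeff_pred, sub_self, zero_mul, neg_zero]
  linear_combination c * key + n * meixner (n - 1) x β c * hcu

theorem meixner_succ_right_relation (hβ : 0 < β) (hc : c ≠ 0) (n x : ℕ) :
    c * (1 - c) * (β + x) * meixner n (x + 1) β c
      = c * (β + 2 * n) * meixner n x β c - n * meixner (n - 1) x β c
        - c ^ 2 * (β + n) * meixner (n + 1) x β c := by
  linear_combination c * meixner_recurrence hβ hc n x + (1 - c) * meixner_contiguous hβ hc n x

end Relations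

noncomputable def meixnerScale (n : ℕ) (β c : ℝ) : ℝ := √(poch β n * c ^ n / n !)

lemma sqrt_succ_mul_meixnerScale_succ {β c : ℝ} (hβ : 0 ≤ β) (hc : 0 ≤ c) (n : ℕ) :
    √(n + 1) * meixnerScale (n + 1) β c = √c * √(β + n) * meixnerScale n β c := by
  have h : (n + 1) * (poch β (n + 1) * c ^ (n + 1) / (n + 1)!)
      = c * (β + n) * (poch β n * c ^ n / n !) := by
    rw [poch_succ, Nat.factorial_succ]
    push_cast
    field_simp
    ring
  have := poch_nonneg hβ n
  rw [meixnerScale, meixnerScale, ← Real.sqrt_mul (by positivity), h,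
    Real.sqrt_mul (by positivity), Real.sqrt_mul hc]

lemma meixnerHat_eq_meixnerScale_mul (n x : ℕ) (β c : ℝ) :
    meixnerHat n x β c = meixnerScale n β c * meixner n x β c := rfl

theorem meixnerHat_succ_right_relation {β c : ℝ} (hβ : 0 < β) (hc : 0 < c) (n x : ℕ) :
    √(n * (β + n - 1)) * (if n = 0 then 0 else meixnerHat (n - 1) x β c)
      - √c * (β + 2 * n) * meixnerHat n x β c
      + c * √((n + 1) * (β + n)) * meixnerHat (n + 1) x β c
      = -√c * (1 - c) * (β + x) * meixnerHat n (x + 1) β c := by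
  have hcc : √c * √c = c := Real.mul_self_sqrt hc.le
  have h₁ : √(n * (β + n - 1)) * (if n = 0 then 0 else meixnerHat (n - 1) x β c) * √c
      = n * meixnerScale n β c * meixner (n - 1) x β c := by
    cases n with
    | zero => simp
    | succ m =>
      have hs := sqrt_succ_mul_meixnerScale_succ hβ.le hc.le m
      have hm : √(m + 1) * √(m + 1) = m + 1 := Real.mul_self_sqrt (by positivity)
      rw [if_neg m.succ_ne_zero, Nat.add_sub_cancel, meixnerHat_eq_meixnerScale_mul]
      push_cast
      rw [show ((m : ℝ) + 1) * (β + (m + 1) - 1) = (m + 1) * (β + m) by ring,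
        Real.sqrt_mul (by positivity)]
      linear_combination (-√(m + 1) * meixner m x β c) * hs
        + (meixnerScale (m + 1) β c * meixner m x β c) * hm
  have h₃ : c * √((n + 1) * (β + n)) * meixnerHat (n + 1) x β c * √c
      = c ^ 2 * (β + n) * meixnerScale n β c * meixner (n + 1) x β c := by
    have hs := sqrt_succ_mul_meixnerScale_succ hβ.le hc.le n
    have hb : √(β + n) * √(β + n) = β + n := Real.mul_self_sqrt (by positivity)
    rw [meixnerHat_eq_meixnerScale_mul, Real.sqrt_mul (by positivity)]
    linear_combination (c * √(β + n) * √c * meixner (n + 1) x β c) * hs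
      + (c * meixner (n + 1) x β c * meixnerScale n β c * √(β + n) * √(β + n)) * hcc
      + (c ^ 2 * meixner (n + 1) x β c * meixnerScale n β c) * hb
  refine mul_right_cancel₀ (Real.sqrt_pos.2 hc).ne' ?_
  rw [meixnerHat_eq_meixnerScale_mul n x, meixnerHat_eq_meixnerScale_mul n (x + 1)]
  linear_combination h₁ + h₃ + meixnerScale n β c * meixner_succ_right_relation hβ hc.ne' n x
    + meixnerScale n β c * (-(β + 2 * n) * meixner n x β c
      + (1 - c) * (β + x) * meixner n (x + 1) β c) * hcc

theorem meixnerHat_Bc_action_general (k c : ℝ) (hk : 0 < k) (hc0 : 0 < c)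
    (n x : ℕ) :
    Real.sqrt ((n : ℝ) * (2 * k + n - 1)) *
        (if n = 0 then 0 else meixnerHat (n - 1) x (2 * k) c) -
      2 * Real.sqrt c * (k + n) * meixnerHat n x (2 * k) c +
      c * Real.sqrt (((n : ℝ) + 1) * (2 * k + n)) * meixnerHat (n + 1) x (2 * k) c =
    -Real.sqrt c * (1 - c) * (2 * k + x) * meixnerHat n (x + 1) (2 * k) c := by
  linear_combination meixnerHat_succ_right_relation (by positivity : (0 : ℝ) < 2 * k) hc0 n x

/-- Three-term contiguous identity in `x` for the orthonormal Meixner polynomials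
(the convention `M̂_{−1} := 0` is immaterial since the coefficient
`√(n(2k+n−1))` vanishes at `n = 0`):
`√(n(2k+n−1)) M̂_{n−1}(x；2k,c) − 2√c(k+n) M̂_n(x;2k,c) + c√((n+1)(2k+n)) M̂_{n+1}(x;2k,c)
  = −√c(1−c)(2k+x) M̂_n(x+1;2k,c)`,
encoding `π_k^+(B_c) v⁽ˣ⁾ = −√((x+1)(2k+x)) v⁽ˣ⁺¹⁾`. -/
theorem meixnerHat_Bc_action (k c : ℝ) (hk : 0 < k) (hc0 : 0 < c) (hc1 : c < 1)
    (n x : ℕ) :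
    Real.sqrt ((n : ℝ) * (2 * k + n - 1)) *
        (if n = 0 then 0 else meixnerHat (n - 1) x (2 * k) c) -
      2 * Real.sqrt c * (k + n) * meixnerHat n x (2 * k) c +
      c * Real.sqrt (((n : ℝ) + 1) * (2 * k + n)) * meixnerHat (n + 1) x (2 * k) c =
    -Real.sqrt c * (1 - c) * (2 * k + x) * meixnerHat n (x + 1) (2 * k) c :=
  meixnerHat_Bc_action_general k c hk hc0 n x
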